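/- Let n ≥ k ≥ 2 be positive integers with k ≡ 2 or 3 (mod 4), and let G be a simple graph on the vertex set [n]. Then Φ(G) = Σ_{a=0}^{C(k,2)−1} Σ_{b=0}^{k} (−1)^a · C(n−b, k−b) · φ(a,b;G). -/

import Mathlib

/-!
Write `C(n - b, k - b)` as the number of `k`-sets `S` containing the `b` effective vertices of
`H`. Swapping the sums, each `k`-set `S` contributes `∑ (-1)^|F|` over the edge sets
`F ⊆ E(G[S])` with `|F| < C(k,2)`. Without the truncation this sum is `1` if `E(G[S]) = ∅` and
`0` otherwise; the truncation only removes `F = E(G[S])` when `G[S]` is complete, and that term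
has sign `(-1)^C(k,2) = -1` because `C(k,2)` is odd exactly when `k ≡ 2, 3 (mod 4)`. Hence `S`
contributes `1` if it is a clique or an anticlique and `0` otherwise.
-/

open Finset

lemma Nat.odd_choose_two_of_mod_four {k : ℕ} (hk : k % 4 = 2 ∨ k % 4 = 3) :
    Odd (k.choose 2) := by
  rw [Nat.odd_iff, Nat.choose_two_right]
  have : k * (k - 1) % 4 = 2 := by
    rw [Nat.mul_mod]
    rcases hk with hk | hk <;> simp [hk, show (k - 1) % 4 = k % 4 - 1 by omega]
  omega

namespace Finset

lemma sum_powerset_filter_card_lt_neg_one_pow {β : Type*} [DecidableEq β]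
    (m : Finset β) {C : ℕ} (hm : #m ≤ C) :
    ∑ F ∈ m.powerset with #F < C, (-1 : ℤ) ^ #F
      = (if m = ∅ then 1 else 0) - if #m = C then (-1) ^ C else 0 := by
  rcases hm.lt_or_eq with hlt | rfl
  · rw [filter_true_of_mem fun F hF => (card_le_card (mem_powerset.1 hF)).trans_lt hlt,
      sum_powerset_neg_one_pow_card, if_neg hlt.ne]
    simp
  · have hproper : {F ∈ m.powerset | #F < #m} = m.powerset.erase m := by
      ext F
      simp only [mem_filter, mem_powerset, mem_erase]
      constructor
      · rintro ⟨hF, hlt⟩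
        exact ⟨fun h => hlt.ne (h ▸ rfl), hF⟩
      · rintro ⟨hne, hF⟩
        exact ⟨hF, card_lt_card (ssubset_of_subset_of_ne hF hne)⟩
    rw [hproper, sum_erase_eq_sub (mem_powerset_self m), sum_powerset_neg_one_pow_card, if_pos rfl]

lemma sum_range_sum_range_mul_card_filter {ι R : Type*} [CommSemiring R]
    (s : Finset ι) (f g : ι → ℕ) (A B : ℕ) (w : ℕ → ℕ → R) :
    ∑ a ∈ range A, ∑ b ∈ range B, w a b * #{x ∈ s | f x = a ∧ g x = b}
      = ∑ x ∈ s with f x < A ∧ g x < B, w (f x) (g x) := by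
  simp only [natCast_card_filter, mul_sum]
  rw [← sum_product', sum_comm, sum_filter]
  refine sum_congr rfl fun x _ => ?_
  have hpair (p : ℕ × ℕ) : (f x = p.1 ∧ g x = p.2) = ((f x, g x) = p) := by rw [Prod.ext_iff]
  simp only [hpair, mul_ite, mul_one, mul_zero]
  rw [sum_ite_eq]
  simp

lemma sum_filter_mul_choose_eq_sum_powersetCard {ι α R : Type*} [Fintype α] [DecidableEq α]
    [CommSemiring R] {n : ℕ} (hn : Fintype.card α = n)
    (s : Finset ι) (t : ι → Finset α) (w : ι → R) (k : ℕ) :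
    ∑ i ∈ s with #(t i) < k + 1, w i * ((n - #(t i)).choose (k - #(t i)) : R)
      = ∑ S ∈ powersetCard k univ, ∑ i ∈ s with t i ⊆ S, w i := by
  have hcount (i : ι) : (if #(t i) < k + 1 then w i * ((n - #(t i)).choose (k - #(t i)) : R)
      else 0) = w i * #{S ∈ powersetCard k univ | t i ⊆ S} := by
    split_ifs with h
    · rw [card_filter_powersetCard_subset _ _ _ (subset_univ _) (by omega), card_univ, hn]
    · rw [filter_false_of_mem fun S hS hsub =>
        h (Nat.lt_succ_of_le ((card_le_card hsub).trans (mem_powersetCard.1 hS).2.le))]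
      simp
  rw [sum_filter, sum_congr rfl fun i _ => hcount i]
  simp only [natCast_card_filter, mul_sum, mul_ite, mul_one, mul_zero]
  rw [sum_comm]
  simp only [sum_filter]

lemma filter_univ_exists_mem_subset_iff {α : Type*} [Fintype α] [DecidableEq α]
    (F : Finset (Sym2 α)) (S : Finset α) :
    ((univ : Finset α).filter fun v => ∃ e ∈ F, v ∈ e) ⊆ S ↔ F ⊆ S.sym2 := by
  simp only [subset_iff, mem_filter, mem_univ, true_and, mem_sym2_iff, forall_exists_index,
    and_imp]
  exact ⟨fun h e he v hv => h e he hv, fun h v e he hv => h he v hv⟩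

end Finset

namespace SimpleGraph

variable {V : Type*} [DecidableEq V] (G : SimpleGraph V) [Fintype G.edgeSet] (S : Finset V)

lemma edgeFinset_inter_sym2_subset_image_offDiag :
    G.edgeFinset ∩ S.sym2 ⊆ S.offDiag.image Sym2.mk.uncurry := by
  intro e he
  induction e using Sym2.ind with
  | h u v =>
    rw [mem_inter, mem_edgeFinset, mem_edgeSet, Finset.mk_mem_sym2_iff] at he
    exact mem_image.2 ⟨(u, v), mem_offDiag.2 ⟨he.2.1, he.2.2, he.1.ne⟩, rfl⟩

lemma card_edgeFinset_inter_sym2_le : #(G.edgeFinset ∩ S.sym2) ≤ (#S).choose 2 :=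
  Sym2.card_image_offDiag S ▸ card_le_card (G.edgeFinset_inter_sym2_subset_image_offDiag S)

lemma isClique_iff_image_offDiag_subset :
    G.IsClique (S : Set V) ↔ S.offDiag.image Sym2.mk.uncurry ⊆ G.edgeFinset := by
  simp only [image_subset_iff, Prod.forall, mem_offDiag, Function.uncurry_apply_pair,
    mem_edgeFinset, mem_edgeSet, and_imp]
  exact ⟨fun h a b ha hb => h ha hb, fun h a ha b hb => h a b ha hb⟩

lemma isClique_iff_card_edgeFinset_inter_sym2 :
    G.IsClique (S : Set V) ↔ #(G.edgeFinset ∩ S.sym2) = (#S).choose 2 := by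
  have hsub := G.edgeFinset_inter_sym2_subset_image_offDiag S
  have hoff : S.offDiag.image Sym2.mk.uncurry ⊆ S.sym2 :=
    image_diag_union_image_offDiag (s := S) ▸ subset_union_right
  rw [isClique_iff_image_offDiag_subset, ← Sym2.card_image_offDiag]
  constructor
  · intro h
    rw [subset_antisymm hsub (subset_inter h hoff)]
  · intro h
    rw [← eq_of_subset_of_card_le hsub h.ge]
    exact inter_subset_left

lemma edgeFinset_inter_sym2_eq_empty_iff :
    G.edgeFinset ∩ S.sym2 = ∅ ↔ ∀ u ∈ S, ∀ v ∈ S, ¬ G.Adj u v := by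
  simp only [eq_empty_iff_forall_notMem, mem_inter, mem_edgeFinset, Sym2.forall, mem_edgeSet,
    Finset.mk_mem_sym2_iff, not_and]
  exact ⟨fun h u hu v hv huv => h u v huv hu hv, fun h u v huv hu hv => h u hu v hv huv⟩

lemma sum_powerset_edgeFinset_inter_sym2_neg_one_pow [DecidableRel G.Adj]
    (hS : Odd ((#S).choose 2)) :
    ∑ F ∈ (G.edgeFinset ∩ S.sym2).powerset with #F < (#S).choose 2, (-1 : ℤ) ^ #F
      = if (∀ u ∈ S, ∀ v ∈ S, u ≠ v → G.Adj u v) ∨ ∀ u ∈ S, ∀ v ∈ S, ¬ G.Adj u v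
        then 1 else 0 := by
  have hclique : (∀ u ∈ S, ∀ v ∈ S, u ≠ v → G.Adj u v) ↔ _ :=
    G.isClique_iff_card_edgeFinset_inter_sym2 S
  have hanti := G.edgeFinset_inter_sym2_eq_empty_iff S
  rw [sum_powerset_filter_card_lt_neg_one_pow _ (G.card_edgeFinset_inter_sym2_le S),
    hS.neg_one_pow]
  by_cases h : G.edgeFinset ∩ S.sym2 = ∅
  · have hC : #(G.edgeFinset ∩ S.sym2) ≠ (#S).choose 2 := by
      rw [h, card_empty]
      exact hS.pos.ne
    rw [if_pos h, if_neg hC, if_pos (Or.inr (hanti.1 h))]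
    norm_num
  by_cases hC : #(G.edgeFinset ∩ S.sym2) = (#S).choose 2
  · rw [if_neg h, if_pos hC, if_pos (Or.inl (hclique.2 hC))]
    norm_num
  rw [if_neg h, if_neg hC, if_neg (by rintro (hc | ha); exacts [hC (hclique.1 hc), h (hanti.2 ha)])]
  norm_num

end SimpleGraph

theorem stmt_17_general (n k : ℕ)
    (hkmod : k % 4 = 2 ∨ k % 4 = 3)
    (G : SimpleGraph (Fin n)) [DecidableRel G.Adj] :
    -- `Φ(G)`: the number of `k`-element subsets inducing a clique or an anticlique
    ((((Finset.powersetCard k (Finset.univ : Finset (Fin n))).filter fun S =>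
        (∀ u ∈ S, ∀ v ∈ S, u ≠ v → G.Adj u v) ∨ (∀ u ∈ S, ∀ v ∈ S, ¬ G.Adj u v)).card : ℤ)) =
      ∑ a ∈ Finset.range (k.choose 2), ∑ b ∈ Finset.range (k + 1),
        (-1 : ℤ) ^ a * ((n - b).choose (k - b) : ℤ) *
          -- `φ(a,b;G)`: the number of subgraphs `H` of `G` (given by an edge set
          -- `F ⊆ E(G)`) with `a` edges and exactly `b` effective vertices
          ((G.edgeFinset.powerset.filter fun F =>
            F.card = a ∧
              ((Finset.univ : Finset (Fin n)).filter fun v => ∃ e ∈ F, v ∈ e).card = b).card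
            : ℤ) := by
  rw [natCast_card_filter, sum_range_sum_range_mul_card_filter, ← filter_filter,
    sum_filter_mul_choose_eq_sum_powersetCard (Fintype.card_fin n)]
  refine sum_congr rfl fun S hS => ?_
  rw [← (mem_powersetCard.1 hS).2] at hkmod ⊢
  convert (G.sum_powerset_edgeFinset_inter_sym2_neg_one_pow S
    (Nat.odd_choose_two_of_mod_four hkmod)).symm using 2
  ext F
  simp only [mem_filter, mem_powerset, subset_inter_iff, filter_univ_exists_mem_subset_iff]
  tauto

theorem stmt_17 (n k : ℕ) (hk : 2 ≤ k) (hkn : k ≤ n)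
    (hkmod : k % 4 = 2 ∨ k % 4 = 3)
    (G : SimpleGraph (Fin n)) [DecidableRel G.Adj] :
    -- `Φ(G)`: the number of `k`-element subsets inducing a clique or an anticlique
    ((((Finset.powersetCard k (Finset.univ : Finset (Fin n))).filter fun S =>
        (∀ u ∈ S, ∀ v ∈ S, u ≠ v → G.Adj u v) ∨ (∀ u ∈ S, ∀ v ∈ S, ¬ G.Adj u v)).card : ℤ)) =
      ∑ a ∈ Finset.range (k.choose 2), ∑ b ∈ Finset.range (k + 1),
        (-1 : ℤ) ^ a * ((n - b).choose (k - b) : ℤ) *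
          -- `φ(a,b;G)`: the number of subgraphs `H` of `G` (given by an edge set
          -- `F ⊆ E(G)`) with `a` edges and exactly `b` effective vertices
          ((G.edgeFinset.powerset.filter fun F =>
            F.card = a ∧
              ((Finset.univ : Finset (Fin n)).filter fun v => ∃ e ∈ F, v ∈ e).card = b).card
            : ℤ) :=
  stmt_17_general n k hkmod G
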